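/- Let f = f' ∘ g : M_a → M_a as constructed (with f' the correction map and g the doubling map). Then f is a bijection of M_a onto itself, f(x) ≤ g(x) for all x ∈ M_a, and f(x) = g(x) whenever the (b-1)-th binary digit of x is 1. -/

import Mathlib

open scoped Classical

noncomputable section

/-- `b = ⌊log₂ a⌋ + 1`. -/
def bb (a : ℕ) : ℕ := Nat.log 2 a + 1

/-- `m = 2^b - a - 1`. -/
def mm (a : ℕ) : ℕ := 2 ^ bb a - a - 1

/-- `q = a - 2^(b-1)`. -/
def qq (a : ℕ) : ℕ := a - 2 ^ (bb a - 1)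

/-- `M_a = {x : 0 < x ≤ a, x is not a power of 2}`. -/
def Ma (a : ℕ) : Set ℕ := {x | 0 < x ∧ x ≤ a ∧ ¬ ∃ k, x = 2 ^ k}

/-- `g(x) = 2x` if bit `b-1` of `x` is `0`, else `g(x) = 2x + 1 - 2^b`. -/
def gg (a x : ℕ) : ℕ := if x.testBit (bb a - 1) then 2 * x + 1 - 2 ^ bb a else 2 * x

/-- `f'(x) = x` if `x ∈ M_a`, else `f'(x) = x + 1 - 2⌈m/2⌉` (intended domain `g(M_a)`). -/
def ff' (a x : ℕ) : ℕ := if x ∈ Ma a then x else x + 1 - 2 * ((mm a + 1) / 2)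

/-- `f = f' ∘ g`. -/
def ff (a x : ℕ) : ℕ := ff' a (gg a x)

/-- the `j`-th binary digit of `x`, as a natural number. -/
def bitv (x j : ℕ) : ℕ := if x.testBit j then 1 else 0

/-- `h(x) = 2^(f(x)-1) + Σ_{j=0}^{b-2} x_j 2^(2^(j+1)-1) + x_{b-1}`. -/
def hh (a x : ℕ) : ℕ :=
  2 ^ (ff a x - 1) + (∑ j ∈ Finset.range (bb a - 1), bitv x j * 2 ^ (2 ^ (j + 1) - 1)) +
    bitv x (bb a - 1)

/-- Hamming weight of `x` viewed as a vector in `F_2^a`. -/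
def wt (a x : ℕ) : ℕ := ((Finset.range a).filter (fun j => x.testBit j)).card

/-- identification of `Z_{2^a}` with `F_2^a` via radix-2 representation. -/
def toVec (a x : ℕ) : Fin a → ZMod 2 := fun j => if x.testBit (j : ℕ) then 1 else 0

/-- `S`, the `F_2`-span of `M_a' = h(M_a)` inside `F_2^a`. -/
def Ssub (a : ℕ) : Submodule (ZMod 2) (Fin a → ZMod 2) :=
  Submodule.span (ZMod 2) (toVec a '' (hh a '' Ma a))

/-- `P_a = {0, 2^0, 2^1, …, 2^(a-1)}`. -/
def Pa (a : ℕ) : Set ℕ := {0} ∪ {y | ∃ j < a, y = 2 ^ j}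

/-- `Q_a = ∅` if `a+1` is a power of `2`, else `{1 ⊕ 2^j : a-m ≤ j ≤ a-1}`. -/
def Qa (a : ℕ) : Set ℕ :=
  if ∃ k, a + 1 = 2 ^ k then ∅ else {y | ∃ j, a - mm a ≤ j ∧ j < a ∧ y = 1 ^^^ 2 ^ j}

/-- `T_a = P_a ∪ Q_a`. -/
def Ta (a : ℕ) : Set ℕ := Pa a ∪ Qa a

/-! Every `x ∈ M_a` lies below `2^b = 2 · 2^(b-1)` and differs from `2^(b-1)`. The map `f` sends
`x` with `2x ≤ a` to the even element `2x`; the other `x < 2^(b-1)` to the odd elements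
`2x + 1 - 2⌈m/2⌉`, which exceed `a - m`; and `x > 2^(b-1)` to the odd elements `g(x) = 2x + 1 - 2^b`,
which are at most `a - m`. The three pieces are injective with disjoint images, so `f` is injective
on the finite set `M_a`, hence a bijection of it. -/

section
variable {a x : ℕ}

lemma two_pow_bb (a : ℕ) : 2 ^ bb a = 2 * 2 ^ (bb a - 1) :=
  pow_succ' 2 (bb a - 1)

lemma two_pow_bb_sub_one_le (ha : a ≠ 0) : 2 ^ (bb a - 1) ≤ a :=
  Nat.pow_log_le_self 2 ha

lemma lt_two_pow_bb (a : ℕ) : a < 2 ^ bb a :=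
  Nat.lt_pow_succ_log_self one_lt_two a

lemma mm_add_add_one (a : ℕ) : mm a + a + 1 = 2 ^ bb a := by
  have := lt_two_pow_bb a
  unfold mm
  omega

lemma finite_Ma (a : ℕ) : (Ma a).Finite :=
  (Set.finite_Iic a).subset fun _ hx => hx.2.1

lemma mem_Ma_of_odd (h3 : 3 ≤ x) (hodd : x % 2 = 1) (hxa : x ≤ a) : x ∈ Ma a := by
  refine ⟨by omega, hxa, ?_⟩
  rintro ⟨_ | k, rfl⟩
  · omega
  · rw [pow_succ] at hodd
    omega

lemma two_mul_mem_Ma (hx : x ∈ Ma a) (h : 2 * x ≤ a) : 2 * x ∈ Ma a := by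
  refine ⟨by linarith [hx.1], h, ?_⟩
  rintro ⟨_ | k, hk⟩
  · omega
  · exact hx.2.2 ⟨k, by rw [pow_succ] at hk; omega⟩

lemma gg_of_lt (h : x < 2 ^ (bb a - 1)) : gg a x = 2 * x := by
  simp [gg, Nat.testBit_lt_two_pow h]

lemma gg_of_le_of_lt (h₁ : 2 ^ (bb a - 1) ≤ x) (h₂ : x < 2 ^ bb a) :
    gg a x = 2 * x + 1 - 2 ^ bb a := by
  simp [gg, Nat.testBit_of_two_pow_le_and_two_pow_add_one_gt h₁ h₂]

lemma ff_of_two_mul_le (hx : x ∈ Ma a) (h : 2 * x ≤ a) : ff a x = 2 * x := by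
  have hx_lt : x < 2 ^ (bb a - 1) := by linarith [lt_two_pow_bb a, two_pow_bb a]
  rw [ff, gg_of_lt hx_lt, ff', if_pos (two_mul_mem_Ma hx h)]

lemma ff_of_lt_two_mul (h₁ : x < 2 ^ (bb a - 1)) (h₂ : a < 2 * x) :
    ff a x = 2 * x + 1 - 2 * ((mm a + 1) / 2) := by
  have h_not_mem : 2 * x ∉ Ma a := fun h => absurd h.2.1 (by omega)
  rw [ff, gg_of_lt h₁, ff', if_neg h_not_mem]

lemma gg_mem_Ma_of_two_pow_lt (hx : x ∈ Ma a) (h : 2 ^ (bb a - 1) < x) : gg a x ∈ Ma a := by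
  have hxa := hx.2.1
  have hB := two_pow_bb a
  have hm := mm_add_add_one a
  rw [gg_of_le_of_lt h.le (by omega)]
  exact mem_Ma_of_odd (by omega) (by omega) (by omega)

lemma ff_eq_gg_of_two_pow_lt (hx : x ∈ Ma a) (h : 2 ^ (bb a - 1) < x) : ff a x = gg a x :=
  if_pos (gg_mem_Ma_of_two_pow_lt hx h)

lemma ff_cases (hx : x ∈ Ma a) :
    (2 * x ≤ a ∧ gg a x = 2 * x ∧ ff a x = 2 * x) ∨
    (a < 2 * x ∧ x < 2 ^ (bb a - 1) ∧ gg a x = 2 * x ∧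
      ff a x = 2 * x + 1 - 2 * ((mm a + 1) / 2)) ∨
    (2 ^ (bb a - 1) < x ∧ gg a x = 2 * x + 1 - 2 ^ bb a ∧ ff a x = gg a x) := by
  have hxa := hx.2.1
  have hlt := lt_two_pow_bb a
  have hne : x ≠ 2 ^ (bb a - 1) := fun h => hx.2.2 ⟨_, h⟩
  rcases lt_or_gt_of_ne hne with hx_lt | hx_gt
  · rcases le_or_gt (2 * x) a with h | h
    · exact Or.inl ⟨h, gg_of_lt hx_lt, ff_of_two_mul_le hx h⟩
    · exact Or.inr (Or.inl ⟨h, hx_lt, gg_of_lt hx_lt, ff_of_lt_two_mul hx_lt h⟩)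
  · exact Or.inr (Or.inr ⟨hx_gt, gg_of_le_of_lt hx_gt.le (by omega),
      ff_eq_gg_of_two_pow_lt hx hx_gt⟩)

lemma ff_mapsTo : Set.MapsTo (ff a) (Ma a) (Ma a) := by
  intro x hx
  have hxa := hx.2.1
  have hH := two_pow_bb_sub_one_le (hx.1.trans_le hxa).ne'
  have hm := mm_add_add_one a
  have hB := two_pow_bb a
  rcases ff_cases hx with ⟨h, -, hf⟩ | ⟨h₁, h₂, -, hf⟩ | ⟨h, -, hf⟩
  · exact hf ▸ two_mul_mem_Ma hx h
  · rw [hf]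
    exact mem_Ma_of_odd (by omega) (by omega) (by omega)
  · exact hf ▸ gg_mem_Ma_of_two_pow_lt hx h

lemma ff_injOn : Set.InjOn (ff a) (Ma a) := by
  intro x hx y hy hxy
  have hxa := hx.2.1
  have hya := hy.2.1
  have hH := two_pow_bb_sub_one_le (hx.1.trans_le hxa).ne'
  have hm := mm_add_add_one a
  have hB := two_pow_bb a
  rcases ff_cases hx with ⟨hx₁, -, hfx⟩ | ⟨hx₁, hx₂, -, hfx⟩ | ⟨hx₁, hgx, hfx⟩ <;>
  rcases ff_cases hy with ⟨hy₁, -, hfy⟩ | ⟨hy₁, hy₂, -, hfy⟩ | ⟨hy₁, hgy, hfy⟩ <;>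
  omega

lemma ff_le_gg (hx : x ∈ Ma a) : ff a x ≤ gg a x := by
  have hm := mm_add_add_one a
  have hB := two_pow_bb a
  rcases ff_cases hx with ⟨-, hg, hf⟩ | ⟨h₁, h₂, hg, hf⟩ | ⟨-, -, hf⟩ <;> omega

end

theorem f_bijOn_general (a : ℕ) :
    Set.BijOn (ff a) (Ma a) (Ma a) ∧
    (∀ x ∈ Ma a, ff a x ≤ gg a x) ∧
    (∀ x ∈ Ma a, x.testBit (bb a - 1) = true → ff a x = gg a x) := by
  refine ⟨((finite_Ma a).injOn_iff_bijOn_of_mapsTo ff_mapsTo).1 ff_injOn,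
    fun x hx => ff_le_gg hx, fun x hx hbit => ff_eq_gg_of_two_pow_lt hx ?_⟩
  exact lt_of_le_of_ne (Nat.ge_two_pow_of_testBit hbit) fun h => hx.2.2 ⟨_, h.symm⟩

/-- `f = f' ∘ g` is a bijection of `M_a` onto itself, with
`f(x) ≤ g(x)` for all `x ∈ M_a`, and `f(x) = g(x)` whenever bit `b-1` of `x` is `1`. -/
theorem f_bijOn (a : ℕ) (ha : 2 ≤ a) :
    Set.BijOn (ff a) (Ma a) (Ma a) ∧
    (∀ x ∈ Ma a, ff a x ≤ gg a x) ∧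
    (∀ x ∈ Ma a, x.testBit (bb a - 1) = true → ff a x = gg a x) :=
  f_bijOn_general a
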